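/- arXiv:2403.15255 — 6 statements merged into one kernel-verified Lean document; each statement's English description precedes it below -/
import Mathlib

section
/- If H is a subgroupoid of a topological groupoid G whose range map is open, then the interior of H in G is also a subgroupoid of G. -/
/-- A groupoid structure on a type `G`: range, source, a (partial, made total)
multiplication meaningful on composable pairs, and inversion. -/
structure GroupoidStruct (G : Type*) where
  r : G → G
  s : G → G
  mul : G → G → G
  inv : G → G
  r_mul : ∀ g h, s g = r h → r (mul g h) = r g
  s_mul : ∀ g h, s g = r h → s (mul g h) = s h
  r_inv : ∀ g, r (inv g) = s g
  s_inv : ∀ g, s (inv g) = r g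
  r_unit : ∀ g, mul (r g) g = g
  s_unit : ∀ g, mul g (s g) = g
  inv_mul : ∀ g, mul (inv g) g = s g
  mul_inv : ∀ g, mul g (inv g) = r g
  assoc : ∀ g h k, s g = r h → s h = r k → mul (mul g h) k = mul g (mul h k)

/-- A subset `H ⊆ G` is a subgroupoid if it is closed under inversion and under
multiplication of composable pairs. -/
def GroupoidStruct.IsSubgroupoid {G : Type*} (gs : GroupoidStruct G) (H : Set G) : Prop :=
  (∀ g ∈ H, gs.inv g ∈ H) ∧
  (∀ g ∈ H, ∀ h ∈ H, gs.s g = gs.r h → gs.mul g h ∈ H)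

/-- If `H` is a subgroupoid of a locally compact Hausdorff topological groupoid `G`
whose range map is open, then the interior of `H` in `G` is also a subgroupoid of `G`. -/
theorem stmt0 {G : Type*} [TopologicalSpace G] [LocallyCompactSpace G] [T2Space G]
    (gs : GroupoidStruct G)
    (hmul : Continuous fun p : { p : G × G // gs.s p.1 = gs.r p.2 } => gs.mul p.1.1 p.1.2)
    (hinv : Continuous gs.inv)
    (hr : IsOpenMap gs.r)
    (H : Set G) (hH : gs.IsSubgroupoid H) :
    gs.IsSubgroupoid (interior H) := by

  obtain ⟨hHinv, hHmul⟩ := hH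
  have inv_inv : ∀ g : G, gs.inv (gs.inv g) = g := by
    intro g
    have key : g = gs.inv (gs.inv g) := by
      calc g = gs.mul (gs.r g) g := (gs.r_unit g).symm
        _ = gs.mul (gs.mul (gs.inv (gs.inv g)) (gs.inv g)) g := by
              rw [gs.inv_mul, gs.s_inv]
        _ = gs.mul (gs.inv (gs.inv g)) (gs.mul (gs.inv g) g) :=
              gs.assoc _ _ _ (by rw [gs.s_inv, gs.r_inv]) (gs.s_inv g)
        _ = gs.mul (gs.inv (gs.inv g)) (gs.s g) := by rw [gs.inv_mul]
        _ = gs.mul (gs.inv (gs.inv g)) (gs.s (gs.inv (gs.inv g))) := by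
              rw [gs.s_inv, gs.r_inv]
        _ = gs.inv (gs.inv g) := gs.s_unit _
    exact key.symm
  have hrc : Continuous gs.r := by
    have h1 : Continuous fun x : G => gs.mul x (gs.inv x) := by
      have hmap : Continuous fun x : G =>
          (⟨(x, gs.inv x), (gs.r_inv x).symm⟩ : {q : G × G // gs.s q.1 = gs.r q.2}) :=
        Continuous.subtype_mk (continuous_id.prodMk hinv) _
      exact hmul.comp hmap
    have h2 : (fun x : G => gs.mul x (gs.inv x)) = gs.r := funext gs.mul_inv
    rwa [h2] at h1
  constructor
  · intro g hg
    have hopen : IsOpen (gs.inv ⁻¹' interior H) := isOpen_interior.preimage hinv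
    have hsub : gs.inv ⁻¹' interior H ⊆ H := by
      intro x hx
      have := hHinv _ (interior_subset hx)
      rwa [inv_inv] at this
    exact interior_maximal hsub hopen
      (show gs.inv (gs.inv g) ∈ interior H by rw [inv_inv]; exact hg)
  · intro g hg h hh hcomp
    have hψ : Continuous fun p : {p : G × G // gs.r p.1 = gs.r p.2} =>
        gs.mul (gs.inv p.1.1) p.1.2 := by
      have hmap : Continuous fun p : {p : G × G // gs.r p.1 = gs.r p.2} =>
          (⟨(gs.inv p.1.1, p.1.2), by rw [gs.s_inv]; exact p.2⟩ :
            {q : G × G // gs.s q.1 = gs.r q.2}) :=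
        Continuous.subtype_mk
          ((hinv.comp ((continuous_fst).comp continuous_subtype_val)).prodMk
            ((continuous_snd).comp continuous_subtype_val)) _
      exact hmul.comp hmap
    have hval : gs.mul (gs.inv g) (gs.mul g h) = h := by
      calc gs.mul (gs.inv g) (gs.mul g h)
          = gs.mul (gs.mul (gs.inv g) g) h := (gs.assoc _ _ _ (gs.s_inv g) hcomp).symm
        _ = gs.mul (gs.s g) h := by rw [gs.inv_mul]
        _ = gs.mul (gs.r h) h := by rw [hcomp]
        _ = h := gs.r_unit h
    set pt : {p : G × G // gs.r p.1 = gs.r p.2} :=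
      ⟨(g, gs.mul g h), (gs.r_mul g h hcomp).symm⟩ with hpt
    have h1 : (fun p : {p : G × G // gs.r p.1 = gs.r p.2} =>
        gs.mul (gs.inv p.1.1) p.1.2) ⁻¹' interior H ∈ nhds pt := by
      apply hψ.continuousAt.preimage_mem_nhds
      show interior H ∈ nhds (gs.mul (gs.inv g) (gs.mul g h))
      rw [hval]
      exact isOpen_interior.mem_nhds hh
    rw [nhds_subtype_eq_comap, Filter.mem_comap] at h1
    obtain ⟨T, hT, hTsub⟩ := h1
    rw [mem_nhds_prod_iff] at hT
    obtain ⟨U, hU, W, hW, hUW⟩ := hT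
    obtain ⟨U', hU'sub, hU'open, hgU'⟩ :=
      mem_nhds_iff.mp (Filter.inter_mem hU (isOpen_interior.mem_nhds hg))
    obtain ⟨W', hW'sub, hW'open, hW'mem⟩ := mem_nhds_iff.mp hW
    set O := W' ∩ gs.r ⁻¹' (gs.r '' U') with hO
    have hOopen : IsOpen O := hW'open.inter ((hr U' hU'open).preimage hrc)
    have hOmem : gs.mul g h ∈ O :=
      ⟨hW'mem, ⟨g, hgU', (gs.r_mul g h hcomp).symm⟩⟩
    have hOsub : O ⊆ H := by
      rintro c ⟨hcW, a, haU', hra⟩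
      have haH : a ∈ H := interior_subset (hU'sub haU').2
      have hmemT : ((a, c) : G × G) ∈ T :=
        hUW ⟨(hU'sub haU').1, hW'sub hcW⟩
      have hp : gs.mul (gs.inv a) c ∈ interior H :=
        hTsub (show (⟨(a, c), hra⟩ : {p : G × G // gs.r p.1 = gs.r p.2}) ∈
          Subtype.val ⁻¹' T from hmemT)
      have hcond : gs.s (gs.inv a) = gs.r c := (gs.s_inv a).trans hra
      have hprod : gs.mul a (gs.mul (gs.inv a) c) ∈ H := by
        apply hHmul a haH _ (interior_subset hp)
        rw [gs.r_mul _ _ hcond, gs.r_inv]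
      have hac : gs.mul a (gs.mul (gs.inv a) c) = c := by
        calc gs.mul a (gs.mul (gs.inv a) c)
            = gs.mul (gs.mul a (gs.inv a)) c :=
              (gs.assoc _ _ _ (gs.r_inv a).symm hcond).symm
          _ = gs.mul (gs.r a) c := by rw [gs.mul_inv]
          _ = gs.mul (gs.r c) c := by rw [hra]
          _ = c := gs.r_unit c
      rwa [hac] at hprod
    exact interior_maximal hOsub hOopen hOmem
end

section
/- In a topological groupoid with open range map, the multiplication map m : G^(2) → G is open. -/
/-- In a topological groupoid with open range map, the multiplication map
`m : G⁽²⁾ → G` on the space of composable pairs is open. -/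
theorem stmt1 {G : Type*} [TopologicalSpace G]
    (gs : GroupoidStruct G)
    (hmul : Continuous fun p : { p : G × G // gs.s p.1 = gs.r p.2 } => gs.mul p.1.1 p.1.2)
    (hinv : Continuous gs.inv)
    (hr : IsOpenMap gs.r) :
    IsOpenMap fun p : { p : G × G // gs.s p.1 = gs.r p.2 } => gs.mul p.1.1 p.1.2 := by
  -- r is continuous since r g = g * g⁻¹
  have hrc : Continuous gs.r := by
    have h1 : Continuous fun g : G =>
        (fun p : { p : G × G // gs.s p.1 = gs.r p.2 } => gs.mul p.1.1 p.1.2)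
          ⟨(g, gs.inv g), (gs.r_inv g).symm⟩ :=
      hmul.comp (Continuous.subtype_mk (continuous_id.prodMk hinv) _)
    simpa [gs.mul_inv] using h1
  -- the "division" map (g, k) ↦ g⁻¹ * k on the r-fibered product is continuous
  have hφ : Continuous fun p : { p : G × G // gs.r p.1 = gs.r p.2 } =>
      gs.mul (gs.inv p.1.1) p.1.2 := by
    have hc : Continuous fun p : { p : G × G // gs.r p.1 = gs.r p.2 } =>
        (⟨(gs.inv p.1.1, p.1.2), by rw [gs.s_inv]; exact p.2⟩ :
          { p : G × G // gs.s p.1 = gs.r p.2 }) :=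
      Continuous.subtype_mk
        ((hinv.comp (continuous_fst.comp continuous_subtype_val)).prodMk
          (continuous_snd.comp continuous_subtype_val)) _
    exact hmul.comp hc
  intro W hW
  rw [isOpen_iff_forall_mem_open]
  rintro k ⟨⟨⟨g, h⟩, hgh⟩, hmemW, rfl⟩
  set k := gs.mul g h with hk
  have hrk : gs.r g = gs.r k := (gs.r_mul g h hgh).symm
  -- get a basic open box around (g, h) inside W
  obtain ⟨O, hO, hWO⟩ := isOpen_induced_iff.mp hW
  have hghO : (g, h) ∈ O := by rw [← hWO] at hmemW; exact hmemW
  obtain ⟨U, V, hU, hV, hgU, hhV, hUVO⟩ := isOpen_prod_iff.mp hO g h hghO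
  -- use continuity of φ at (g, k): φ (g, k) = h ∈ V
  have hφgk : gs.mul (gs.inv g) k = h := by
    rw [hk, ← gs.assoc (gs.inv g) g h (gs.s_inv g) hgh, gs.inv_mul, hgh, gs.r_unit]
  have hpre : IsOpen ((fun p : { p : G × G // gs.r p.1 = gs.r p.2 } =>
      gs.mul (gs.inv p.1.1) p.1.2) ⁻¹' V) := hφ.isOpen_preimage V hV
  obtain ⟨O₂, hO₂, hO₂eq⟩ := isOpen_induced_iff.mp hpre
  have hgkO₂ : (g, k) ∈ O₂ := by
    have : (⟨(g, k), hrk⟩ : { p : G × G // gs.r p.1 = gs.r p.2 }) ∈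
        (fun p : { p : G × G // gs.r p.1 = gs.r p.2 } =>
          gs.mul (gs.inv p.1.1) p.1.2) ⁻¹' V := by
      simp only [Set.mem_preimage]; rw [hφgk]; exact hhV
    rw [← hO₂eq] at this; exact this
  obtain ⟨U₁, V₁, hU₁, hV₁, hgU₁, hkV₁, hUV₁⟩ := isOpen_prod_iff.mp hO₂ g k hgkO₂
  -- the open neighborhood of k
  refine ⟨V₁ ∩ gs.r ⁻¹' (gs.r '' (U ∩ U₁)), ?_, ?_, ?_⟩
  · -- contained in the image
    rintro k' ⟨hk'V₁, g', ⟨hg'U, hg'U₁⟩, hrg'⟩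
    have hrr : gs.r g' = gs.r k' := hrg'
    set h' := gs.mul (gs.inv g') k' with hh'
    have hh'V : h' ∈ V := by
      have hmem : ((g', k') : G × G) ∈ O₂ := hUV₁ (Set.mk_mem_prod hg'U₁ hk'V₁)
      have : (⟨(g', k'), hrr⟩ : { p : G × G // gs.r p.1 = gs.r p.2 }) ∈
          Subtype.val ⁻¹' O₂ := hmem
      rw [hO₂eq] at this
      exact this
    have hcomp : gs.s g' = gs.r h' := by
      rw [hh', gs.r_mul (gs.inv g') k' (by rw [gs.s_inv]; exact hrr), gs.r_inv]
    refine ⟨⟨(g', h'), hcomp⟩, ?_, ?_⟩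
    · rw [← hWO]
      exact hUVO (Set.mk_mem_prod hg'U hh'V)
    · show gs.mul g' h' = k'
      rw [hh', ← gs.assoc g' (gs.inv g') k' (gs.r_inv g').symm
        (by rw [gs.s_inv]; exact hrr), gs.mul_inv, hrr, gs.r_unit]
  · exact hV₁.inter (hrc.isOpen_preimage _ (hr (U ∩ U₁) (hU.inter hU₁)))
  · exact ⟨hkV₁, g, ⟨hgU, hgU₁⟩, hrk⟩
end

section
/- A locally compact Hausdorff étale groupoid G is effective (i.e., the interior of its isotropy bundle equals the unit space) if and only if G contains no nontrivial open abelian subgroupoid, where a subgroupoid S is abelian if it is contained in the isotropy and any two composable elements of S commute, and S is trivial if S ⊆ G^(0). -/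
/-- The unit space of a groupoid, viewed inside `G`. -/
def GroupoidStruct.unitSpace {G : Type*} (gs : GroupoidStruct G) : Set G :=
  {g | gs.r g = g}

/-- The isotropy bundle `Iso(G) = {g : r g = s g}`. -/
def GroupoidStruct.iso {G : Type*} (gs : GroupoidStruct G) : Set G :=
  {g | gs.r g = gs.s g}

/-- An abelian subgroupoid: a subgroupoid contained in the isotropy bundle in which
any two composable elements commute. -/
def GroupoidStruct.IsAbelianSubgroupoid {G : Type*} (gs : GroupoidStruct G)
    (S : Set G) : Prop :=
  gs.IsSubgroupoid S ∧ S ⊆ gs.iso ∧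
  ∀ g ∈ S, ∀ h ∈ S, gs.s g = gs.r h → gs.mul g h = gs.mul h g

/-!
If an arrow `g` lies in the interior of `Iso(G)`, the basis of `G` formed by ranges of continuous
local sections of `r` yields a continuous section `σ` of `r` over an open set of units `V` with
`g ∈ range σ ⊆ Iso(G)`. The integer powers `σ(u)^m`, computed in the isotropy groups `G(u)`, form
an abelian subgroupoid containing `g`. It is open because each `u ↦ σ(u)^m` is again a continuous
section of the local homeomorphism `r`, hence has open range. So a groupoid without nontrivial
open abelian subgroupoids is effective; the converse holds because an open abelian subgroupoid
lies in `Int(Iso(G))`, and `G⁽⁰⁾ ⊆ Int(Iso(G))` since `G⁽⁰⁾ = range r` is open.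
-/

namespace GroupoidStruct

variable {G : Type*} (gs : GroupoidStruct G)

lemma r_r (g : G) : gs.r (gs.r g) = gs.r g := by
  simpa only [gs.mul_inv] using gs.r_mul g (gs.inv g) (gs.r_inv g).symm

lemma s_r (g : G) : gs.s (gs.r g) = gs.r g := by
  simpa only [gs.mul_inv, gs.s_inv] using gs.s_mul g (gs.inv g) (gs.r_inv g).symm

lemma unitSpace_eq_range_r : gs.unitSpace = Set.range gs.r :=
  Set.ext fun g => ⟨fun hg => ⟨g, hg⟩, by rintro ⟨h, rfl⟩; exact gs.r_r h⟩

lemma s_of_mem_unitSpace {u : G} (hu : u ∈ gs.unitSpace) : gs.s u = u := by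
  rw [← hu, s_r]

lemma unitSpace_subset_iso : gs.unitSpace ⊆ gs.iso :=
  fun _ hu => hu.trans (gs.s_of_mem_unitSpace hu).symm

abbrev IsotropyGroup (u : gs.unitSpace) : Type _ := {x : G // gs.r x = u ∧ gs.s x = u}

instance (u : gs.unitSpace) : Group (gs.IsotropyGroup u) where
  mul x y := ⟨gs.mul x y, by
    rw [gs.r_mul _ _ (x.2.2.trans y.2.1.symm), gs.s_mul _ _ (x.2.2.trans y.2.1.symm)]
    exact ⟨x.2.1, y.2.2⟩⟩
  one := ⟨u, u.2, gs.s_of_mem_unitSpace u.2⟩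
  inv x := ⟨gs.inv x, by rw [gs.r_inv, gs.s_inv]; exact x.2.symm⟩
  mul_assoc x y z := Subtype.ext <|
    gs.assoc x y z (x.2.2.trans y.2.1.symm) (y.2.2.trans z.2.1.symm)
  one_mul x := Subtype.ext <| x.2.1 ▸ gs.r_unit x
  mul_one x := Subtype.ext <| x.2.2 ▸ gs.s_unit x
  inv_mul_cancel x := Subtype.ext <| (gs.inv_mul x).trans x.2.2

section IsotropySection

variable {V : Set G} {σ : V → G} (hσr : ∀ u, gs.r (σ u) = u) (hσs : ∀ u, gs.s (σ u) = u)

include hσr in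
lemma mem_unitSpace_of_section (u : V) : (u : G) ∈ gs.unitSpace := by
  change gs.r u = u
  rw [← hσr u, r_r]

def isotropySection (u : V) : gs.IsotropyGroup ⟨u, gs.mem_unitSpace_of_section hσr u⟩ :=
  ⟨σ u, hσr u, hσs u⟩

def zpowersOfSection : Set G :=
  ⋃ m : ℤ, Set.range fun u => (↑(gs.isotropySection hσr hσs u ^ m) : G)

lemma range_subset_zpowersOfSection : Set.range σ ⊆ gs.zpowersOfSection hσr hσs :=
  Set.subset_iUnion_of_subset 1 fun _ ⟨u, hu⟩ => ⟨u, by simp only [zpow_one]; exact hu⟩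

lemma isAbelianSubgroupoid_zpowersOfSection :
    gs.IsAbelianSubgroupoid (gs.zpowersOfSection hσr hσs) := by
  set a := gs.isotropySection hσr hσs
  have eq_of_s_eq_r {u v : V} {m k : ℤ} (h : gs.s ↑(a u ^ m) = gs.r ↑(a v ^ k)) : u = v :=
    Subtype.ext ((a u ^ m).2.2.symm.trans (h.trans (a v ^ k).2.1))
  simp only [IsAbelianSubgroupoid, IsSubgroupoid, zpowersOfSection, Set.mem_iUnion,
    Set.mem_range]
  refine ⟨⟨?_, ?_⟩, Set.iUnion_subset fun m => Set.range_subset_iff.2 fun u => ?_, ?_⟩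
  · rintro _ ⟨m, u, rfl⟩
    exact ⟨-m, u, by rw [zpow_neg]; rfl⟩
  · rintro _ ⟨m, u, rfl⟩ _ ⟨k, v, rfl⟩ h
    obtain rfl := eq_of_s_eq_r h
    exact ⟨m + k, u, by rw [zpow_add]; rfl⟩
  · exact (a u ^ m).2.1.trans (a u ^ m).2.2.symm
  · rintro _ ⟨m, u, rfl⟩ _ ⟨k, v, rfl⟩ h
    obtain rfl := eq_of_s_eq_r h
    exact congrArg Subtype.val (zpow_mul_comm (a u) m k)

variable [TopologicalSpace G]

lemma continuous_isotropySection_zpow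
    (hmul : Continuous fun p : { p : G × G // gs.s p.1 = gs.r p.2 } => gs.mul p.1.1 p.1.2)
    (hinv : Continuous gs.inv) (hσ : Continuous σ) (m : ℤ) :
    Continuous fun u => (↑(gs.isotropySection hσr hσs u ^ m) : G) := by
  have hpow (n : ℕ) : Continuous fun u => (↑(gs.isotropySection hσr hσs u ^ n) : G) := by
    induction n with
    | zero => exact continuous_subtype_val
    | succ n ih =>
      simp only [pow_succ]
      exact hmul.comp ((ih.prodMk hσ).subtype_mk fun u =>
        (gs.isotropySection hσr hσs u ^ n).2.2.trans (hσr u).symm)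
  cases m with
  | ofNat n => simpa only [Int.ofNat_eq_natCast, zpow_natCast] using hpow n
  | negSucc n =>
    simp only [zpow_negSucc]
    exact hinv.comp (hpow (n + 1))

lemma isOpen_zpowersOfSection (hr : IsLocalHomeomorph gs.r) (hV : IsOpen V)
    (hmul : Continuous fun p : { p : G × G // gs.s p.1 = gs.r p.2 } => gs.mul p.1.1 p.1.2)
    (hinv : Continuous gs.inv) (hσ : Continuous σ) :
    IsOpen (gs.zpowersOfSection hσr hσs) := by
  refine isOpen_iUnion fun m => (hr.isOpenEmbedding_of_comp ?_
    (gs.continuous_isotropySection_zpow hσr hσs hmul hinv hσ m)).isOpen_range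
  convert hV.isOpenEmbedding_subtypeVal
  exact funext fun u => (gs.isotropySection hσr hσs u ^ m).2.1

end IsotropySection

variable [TopologicalSpace G]

lemma isOpen_unitSpace (hr : IsLocalHomeomorph gs.r) : IsOpen gs.unitSpace :=
  gs.unitSpace_eq_range_r ▸ hr.isOpenMap.isOpen_range

lemma exists_isOpen_isAbelianSubgroupoid_mem
    (hmul : Continuous fun p : { p : G × G // gs.s p.1 = gs.r p.2 } => gs.mul p.1.1 p.1.2)
    (hinv : Continuous gs.inv) (hr : IsLocalHomeomorph gs.r) {g : G}
    (hg : g ∈ interior gs.iso) :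
    ∃ S : Set G, IsOpen S ∧ gs.IsAbelianSubgroupoid S ∧ g ∈ S := by
  obtain ⟨_, ⟨V, hV, σ, hrσ, rfl⟩, hgσ, hσiso⟩ :=
    hr.isTopologicalBasis.exists_subset_of_mem_open hg isOpen_interior
  have hσr (u : V) : gs.r (σ u) = u := congrFun hrσ u
  have hσs (u : V) : gs.s (σ u) = u := (interior_subset (hσiso ⟨u, rfl⟩)).symm.trans (hσr u)
  exact ⟨_, gs.isOpen_zpowersOfSection hσr hσs hr hV hmul hinv σ.continuous,
    gs.isAbelianSubgroupoid_zpowersOfSection hσr hσs,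
    gs.range_subset_zpowersOfSection hσr hσs hgσ⟩

end GroupoidStruct

theorem stmt4_general {G : Type*} [TopologicalSpace G]
    (gs : GroupoidStruct G)
    (hmul : Continuous fun p : { p : G × G // gs.s p.1 = gs.r p.2 } => gs.mul p.1.1 p.1.2)
    (hinv : Continuous gs.inv)
    (hr : IsLocalHomeomorph gs.r) :
    interior gs.iso = gs.unitSpace ↔
      ∀ S : Set G, IsOpen S → gs.IsAbelianSubgroupoid S → S ⊆ gs.unitSpace := by
  refine ⟨fun heff S hS hSab => heff ▸ interior_maximal hSab.2.1 hS, fun h => ?_⟩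
  refine subset_antisymm (fun g hg => ?_)
    (interior_maximal gs.unitSpace_subset_iso (gs.isOpen_unitSpace hr))
  obtain ⟨S, hS, hSab, hgS⟩ := gs.exists_isOpen_isAbelianSubgroupoid_mem hmul hinv hr hg
  exact h S hS hSab hgS

/-- A locally compact Hausdorff étale groupoid `G` is effective (the interior of its
isotropy bundle equals the unit space) if and only if `G` contains no nontrivial open
abelian subgroupoid. -/
theorem stmt4 {G : Type*} [TopologicalSpace G] [LocallyCompactSpace G] [T2Space G]
    (gs : GroupoidStruct G)
    (hmul : Continuous fun p : { p : G × G // gs.s p.1 = gs.r p.2 } => gs.mul p.1.1 p.1.2)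
    (hinv : Continuous gs.inv)
    (hr : IsLocalHomeomorph gs.r)
    (hs : IsLocalHomeomorph gs.s) :
    interior gs.iso = gs.unitSpace ↔
      ∀ S : Set G, IsOpen S → gs.IsAbelianSubgroupoid S → S ⊆ gs.unitSpace :=
  stmt4_general gs hmul hinv hr
end

section
/- Let G be a group, S ≤ G an abelian subgroup, and suppose that for every g ∈ G and every integer k ≥ 1, the following 'immediately centralizing' condition holds: if for all s ∈ S there exists 1 ≤ j ≤ k with g s^j = s^j g, then g commutes with every element of S. Then every g ∈ G satisfies: the conjugacy class {s⁻¹ g s : s ∈ S} has cardinality 1 or is infinite. -/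
/-- If `S` is an abelian subgroup of a group `G` that is "immediately centralizing"
(for every `g` and every `k ≥ 1`: if each `s ∈ S` admits some `1 ≤ j ≤ k` with
`g sʲ = sʲ g`, then `g` commutes with all of `S`), then for every `g ∈ G` the
`S`-conjugacy class `{s⁻¹ g s : s ∈ S}` is a singleton or infinite. -/
theorem stmt6 {G : Type*} [Group G] (S : Subgroup G)
    (hab : ∀ a ∈ S, ∀ b ∈ S, a * b = b * a)
    (himm : ∀ (g : G) (k : ℕ), 1 ≤ k →
      (∀ s ∈ S, ∃ j : ℕ, 1 ≤ j ∧ j ≤ k ∧ g * s ^ j = s ^ j * g) →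
      ∀ s ∈ S, g * s = s * g) :
    ∀ g : G, {x | ∃ s ∈ S, x = s⁻¹ * g * s} = {g} ∨
      Set.Infinite {x | ∃ s ∈ S, x = s⁻¹ * g * s} := by
  intro g
  by_cases hinf : Set.Infinite {x | ∃ s ∈ S, x = s⁻¹ * g * s}
  · exact Or.inr hinf
  left
  rw [Set.not_infinite] at hinf
  have hgT : g ∈ {x | ∃ s ∈ S, x = s⁻¹ * g * s} := ⟨1, S.one_mem, by group⟩
  set n := hinf.toFinset.card with hn
  have hn1 : 1 ≤ n := Finset.card_pos.mpr ⟨g, hinf.mem_toFinset.mpr hgT⟩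
  have hcomm : ∀ s ∈ S, g * s = s * g := by
    apply himm g n hn1
    intro s hs
    have hmaps : ∀ i ∈ Finset.range (n + 1), (s ^ i)⁻¹ * g * s ^ i ∈ hinf.toFinset := by
      intro i _
      exact hinf.mem_toFinset.mpr ⟨s ^ i, S.pow_mem hs i, rfl⟩
    have hcard : hinf.toFinset.card < (Finset.range (n + 1)).card := by
      simp [hn]
    obtain ⟨i, hi, j, hj, hne, heq⟩ :=
      Finset.exists_ne_map_eq_of_card_lt_of_maps_to hcard hmaps
    simp only [Finset.mem_range] at hi hj
    have aux : ∀ i j : ℕ, i < j → j ≤ n →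
        (s ^ i)⁻¹ * g * s ^ i = (s ^ j)⁻¹ * g * s ^ j →
        ∃ d : ℕ, 1 ≤ d ∧ d ≤ n ∧ g * s ^ d = s ^ d * g := by
      intro i j hij hjn heq
      obtain ⟨d, hd, rfl⟩ : ∃ d, 0 < d ∧ j = i + d := ⟨j - i, by omega, by omega⟩
      rw [pow_add] at heq
      set a := s ^ i
      set b := s ^ d
      have h2 : Commute a b := (Commute.refl s).pow_pow i d
      have hrw : (a * b)⁻¹ * g * (a * b) = b⁻¹ * (a⁻¹ * g * a) * b := by group
      rw [hrw] at heq
      have hxb : Commute (a⁻¹ * g * a) b := by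
        show (a⁻¹ * g * a) * b = b * (a⁻¹ * g * a)
        calc (a⁻¹ * g * a) * b = b * (b⁻¹ * (a⁻¹ * g * a) * b) := by group
          _ = b * (a⁻¹ * g * a) := by rw [← heq]
      have hga : g = a * (a⁻¹ * g * a) * a⁻¹ := by group
      have hgb : Commute g b := by
        rw [hga]
        exact Commute.mul_left (Commute.mul_left h2 hxb) h2.inv_left
      exact ⟨d, hd, by omega, hgb⟩
    rcases hne.lt_or_gt with h | h
    · exact aux i j h (by omega) heq
    · exact aux j i h (by omega) heq.symm
  ext x
  simp only [Set.mem_setOf_eq, Set.mem_singleton_iff]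
  constructor
  · rintro ⟨s, hs, rfl⟩
    rw [mul_assoc, hcomm s hs, ← mul_assoc, inv_mul_cancel, one_mul]
  · rintro rfl
    exact hgT
end

section
/- Let S = ⊕_{n ∈ ℕ} A₃ viewed as the subgroup of ∏_{n ∈ ℕ} S₃ of finitely supported sequences with entries in the alternating group A₃, let h ∈ ∏_{n ∈ ℕ} S₃ be the constant sequence with value the transposition (1 2), and let G = ⟨S, h⟩. Then S is a normal abelian subgroup of G, and every g ∈ G \ S has infinite S-conjugacy class {t⁻¹ g t : t ∈ S}. -/
/-- The direct sum `⊕_{n ∈ ℕ} A₃`: finitely supported sequences in `∏_{n ∈ ℕ} S₃`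
with entries in the alternating group. -/
def Sgrp : Subgroup (ℕ → Equiv.Perm (Fin 3)) where
  carrier := {f | {n | f n ≠ 1}.Finite ∧ ∀ n, f n ∈ alternatingGroup (Fin 3)}
  one_mem' := ⟨by simp, fun n => one_mem _⟩
  mul_mem' := by
    rintro f g ⟨hf, hf'⟩ ⟨hg, hg'⟩
    refine ⟨(hf.union hg).subset ?_, fun n => mul_mem (hf' n) (hg' n)⟩
    intro n hn
    simp only [Set.mem_setOf_eq, Pi.mul_apply] at hn
    by_contra h
    simp only [Set.mem_union, Set.mem_setOf_eq, not_or, not_not] at h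
    exact hn (by rw [h.1, h.2, one_mul])
  inv_mem' := by
    rintro f ⟨hf, hf'⟩
    refine ⟨hf.subset ?_, fun n => inv_mem (hf' n)⟩
    intro n hn
    simp only [Set.mem_setOf_eq, Pi.inv_apply] at hn ⊢
    exact fun h => hn (by rw [h, inv_one])

/-- The constant sequence `((1 2), (1 2), …)` in `∏_{n ∈ ℕ} S₃`. -/
def hseq : ℕ → Equiv.Perm (Fin 3) := fun _ => Equiv.swap 0 1

/-- `G = ⟨S, h⟩`. -/
def Ggrp : Subgroup (ℕ → Equiv.Perm (Fin 3)) := Sgrp ⊔ Subgroup.closure {hseq}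

open Equiv in
private def cyc : Equiv.Perm (Fin 3) := Equiv.swap 0 1 * Equiv.swap 0 2

lemma key1 : ∀ x : Equiv.Perm (Fin 3),
    Equiv.Perm.sign (Equiv.swap 0 1 * x) = 1 → Equiv.Perm.sign x ≠ 1 := by decide

lemma key2 : ∀ x : Equiv.Perm (Fin 3),
    Equiv.Perm.sign x ≠ 1 → cyc⁻¹ * x * cyc ≠ x := by decide

lemma key3 : Equiv.Perm.sign cyc = 1 := by decide

lemma key4 : ∀ x y : Equiv.Perm (Fin 3),
    Equiv.Perm.sign x = 1 → Equiv.Perm.sign y = 1 → x * y = y * x := by decide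

lemma mem_Sgrp {f : ℕ → Equiv.Perm (Fin 3)} :
    f ∈ Sgrp ↔ {n | f n ≠ 1}.Finite ∧ ∀ n, f n ∈ alternatingGroup (Fin 3) := Iff.rfl

lemma conj_mem_Sgrp (g : ℕ → Equiv.Perm (Fin 3)) {a : ℕ → Equiv.Perm (Fin 3)}
    (ha : a ∈ Sgrp) : g * a * g⁻¹ ∈ Sgrp := by
  obtain ⟨hfin, hA⟩ := mem_Sgrp.1 ha
  refine mem_Sgrp.2 ⟨hfin.subset ?_, fun n => ?_⟩
  · intro n hn
    simp only [Set.mem_setOf_eq, Pi.mul_apply, Pi.inv_apply] at hn ⊢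
    intro h
    exact hn (by rw [h, mul_one, mul_inv_cancel])
  · simp only [Pi.mul_apply, Pi.inv_apply, Equiv.Perm.mem_alternatingGroup, map_mul, map_inv]
    have := (Equiv.Perm.mem_alternatingGroup).1 (hA n)
    rw [this]
    group

lemma hseq_sq : hseq * hseq = 1 := by
  funext n
  simp [hseq, Pi.mul_apply]

def Kgrp : Subgroup (ℕ → Equiv.Perm (Fin 3)) where
  carrier := {f | f ∈ Sgrp ∨ hseq * f ∈ Sgrp}
  one_mem' := Or.inl (one_mem _)
  mul_mem' := by
    rintro f g (hf | hf) (hg | hg)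
    · exact Or.inl (mul_mem hf hg)
    · refine Or.inr ?_
      have e : hseq * (f * g) = (hseq * f * hseq⁻¹) * (hseq * g) := by group
      rw [e]
      exact mul_mem (conj_mem_Sgrp hseq hf) hg
    · refine Or.inr ?_
      have e : hseq * (f * g) = (hseq * f) * g := by group
      rw [e]
      exact mul_mem hf hg
    · refine Or.inl ?_
      have e : f * g = ((hseq * hseq) * (f * g)) := by rw [hseq_sq, one_mul]
      have e2 : (hseq * hseq) * (f * g) = (hseq * (hseq * f) * hseq⁻¹) * (hseq * g) := by group
      rw [e, e2]
      exact mul_mem (conj_mem_Sgrp hseq hf) hg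
  inv_mem' := by
    rintro f (hf | hf)
    · exact Or.inl (inv_mem hf)
    · refine Or.inr ?_
      have e : hseq * f⁻¹ = (hseq * (hseq * f)⁻¹ * hseq⁻¹) * (hseq * hseq) := by group
      rw [e, hseq_sq, mul_one]
      exact conj_mem_Sgrp hseq (inv_mem hf)

lemma mem_Kgrp {f : ℕ → Equiv.Perm (Fin 3)} :
    f ∈ Kgrp ↔ f ∈ Sgrp ∨ hseq * f ∈ Sgrp := Iff.rfl

lemma Ggrp_le_K : Ggrp ≤ Kgrp := by
  refine sup_le (fun f hf => Or.inl hf) ((Subgroup.closure_le _).2 ?_)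
  rintro x rfl
  exact Or.inr (by rw [hseq_sq]; exact one_mem _)

/-- `S = ⊕ₙ A₃` is a normal abelian subgroup of `G = ⟨S, h⟩`, and every
`g ∈ G \ S` has infinite `S`-conjugacy class. -/
theorem stmt8 :
    Sgrp ≤ Ggrp ∧
    (∀ a ∈ Sgrp, ∀ b ∈ Sgrp, a * b = b * a) ∧
    (∀ g ∈ Ggrp, ∀ a ∈ Sgrp, g * a * g⁻¹ ∈ Sgrp) ∧
    (∀ g ∈ Ggrp, g ∉ Sgrp → Set.Infinite {x | ∃ t ∈ Sgrp, x = t⁻¹ * g * t}) := by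
  refine ⟨le_sup_left, ?_, fun g _ a ha => conj_mem_Sgrp g ha, ?_⟩
  · intro a ha b hb
    funext n
    exact key4 _ _ ((Equiv.Perm.mem_alternatingGroup).1 ((mem_Sgrp.1 ha).2 n))
      ((Equiv.Perm.mem_alternatingGroup).1 ((mem_Sgrp.1 hb).2 n))
  · intro g hg hgS
    have hK := Ggrp_le_K hg
    have hgood : hseq * g ∈ Sgrp := (mem_Kgrp.1 hK).resolve_left hgS
    have hodd : ∀ n, Equiv.Perm.sign (g n) ≠ 1 := by
      intro n
      have := (Equiv.Perm.mem_alternatingGroup).1 ((mem_Sgrp.1 hgood).2 n)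
      simp only [Pi.mul_apply, hseq] at this
      exact key1 _ this
    set t : ℕ → (ℕ → Equiv.Perm (Fin 3)) := fun n => Pi.mulSingle n cyc with ht
    have htS : ∀ n, t n ∈ Sgrp := by
      intro n
      refine mem_Sgrp.2 ⟨Set.Finite.subset (Set.finite_singleton n) ?_, fun m => ?_⟩
      · intro m hm
        simp only [Set.mem_setOf_eq, ht] at hm
        by_contra h
        exact hm (by simp [Pi.mulSingle_eq_of_ne h])
      · by_cases h : m = n
        · subst h
          simpa [ht, Equiv.Perm.mem_alternatingGroup] using key3
        · simp [ht, Pi.mulSingle_eq_of_ne h, one_mem]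
    refine Set.infinite_of_injective_forall_mem
      (f := fun n => (t n)⁻¹ * g * t n) ?_ (fun n => ⟨t n, htS n, rfl⟩)
    intro n m hnm
    by_contra hne
    have := congrFun hnm n
    simp only [Pi.mul_apply, Pi.inv_apply, ht, Pi.mulSingle_eq_same,
      Pi.mulSingle_eq_of_ne (Ne.symm (fun h => hne h.symm))] at this
    rw [inv_one, one_mul, mul_one] at this
    exact key2 _ (hodd n) this
end

section
/- Let p, q be coprime integers with q > 0, and c_{p/q}((m₁,m₂),(n₁,n₂)) = exp(2πi (p/q) m₂ n₁) on ℤ². For the subgroup H = ℤ·(k,0) ⊕ ℤ·(m,n) with k, n > 0, the restriction of c_{p/q} to H is symmetric if and only if q divides n·k. -/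
/-- The 2-cocycle `c_θ((m₁,m₂),(n₁,n₂)) = exp(2πi θ m₂ n₁)` on `ℤ²`, valued in the
circle group `T`. -/
noncomputable def cθ (θ : ℝ) (x y : ℤ × ℤ) : Circle :=
  Circle.exp (2 * Real.pi * θ * (x.2 : ℝ) * (y.1 : ℝ))

/-!
`c_θ(x, y) / c_θ(y, x) = exp(2πi θ ω(x, y))` for the skew form `ω(x, y) = x₂y₁ - y₂x₁`, so the
restriction of `c_{p/q}` to `H` is symmetric iff `q` divides every value of `ω` on `H`. Since `ω` is
bilinear and alternating, its values on `H` are exactly the multiples of `ω((m,n),(k,0)) = n k`.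
-/

def skewForm (x y : ℤ × ℤ) : ℤ := x.2 * y.1 - y.2 * x.1

lemma cθ_eq_cθ_iff (θ : ℝ) (x y : ℤ × ℤ) :
    cθ θ x y = cθ θ y x ↔ ∃ t : ℤ, θ * skewForm x y = t := by
  have h2pi : (2 * Real.pi) ≠ 0 := by positivity
  rw [cθ, cθ, Circle.exp_eq_exp]
  refine exists_congr fun t => ?_
  rw [skewForm]
  push_cast
  constructor
  · intro h
    exact mul_left_cancel₀ h2pi (by linear_combination h)
  · intro h
    linear_combination 2 * Real.pi * h

lemma exists_div_mul_eq_intCast_iff_dvd {p q : ℤ} (hq : q ≠ 0) (hcop : IsCoprime p q) (N : ℤ) :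
    (∃ t : ℤ, (p / q : ℝ) * N = t) ↔ q ∣ N := by
  have hq' : (q : ℝ) ≠ 0 := Int.cast_ne_zero.2 hq
  have hdiv : (∃ t : ℤ, (p / q : ℝ) * N = t) ↔ q ∣ p * N := by
    refine exists_congr fun t => ?_
    rw [div_mul_eq_mul_div, div_eq_iff hq', mul_comm (t : ℝ)]
    exact_mod_cast Iff.rfl
  rw [hdiv]
  exact ⟨hcop.symm.dvd_of_dvd_mul_left, fun h => h.mul_left p⟩

lemma dvd_skewForm_of_mem_closure_pair {k m n : ℤ} {x y : ℤ × ℤ}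
    (hx : x ∈ AddSubgroup.closure {((k, 0) : ℤ × ℤ), (m, n)})
    (hy : y ∈ AddSubgroup.closure {((k, 0) : ℤ × ℤ), (m, n)}) :
    n * k ∣ skewForm x y := by
  obtain ⟨a, b, rfl⟩ := AddSubgroup.mem_closure_pair.1 hx
  obtain ⟨a', b', rfl⟩ := AddSubgroup.mem_closure_pair.1 hy
  refine ⟨b * a' - b' * a, ?_⟩
  simp only [skewForm, Prod.smul_mk, Int.zsmul_eq_mul, mul_zero, Prod.mk_add_mk, zero_add]
  ring

theorem stmt12_general (p q : ℤ) (hq : 0 < q) (hcop : IsCoprime p q)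
    (k m n : ℤ) :
    (∀ x ∈ AddSubgroup.closure {((k, 0) : ℤ × ℤ), (m, n)},
      ∀ y ∈ AddSubgroup.closure {((k, 0) : ℤ × ℤ), (m, n)},
        cθ ((p : ℝ) / (q : ℝ)) x y = cθ ((p : ℝ) / (q : ℝ)) y x) ↔ q ∣ n * k := by
  simp_rw [cθ_eq_cθ_iff, exists_div_mul_eq_intCast_iff_dvd hq.ne' hcop]
  refine ⟨fun h => ?_, fun h x hx y hy => h.trans (dvd_skewForm_of_mem_closure_pair hx hy)⟩
  have hgen : skewForm (m, n) (k, 0) = n * k := by simp [skewForm]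
  rw [← hgen]
  exact h _ (AddSubgroup.subset_closure (by simp)) _ (AddSubgroup.subset_closure (by simp))

/-- For `p, q` coprime with `q > 0` and `H = ℤ·(k,0) ⊕ ℤ·(m,n)` with `k, n > 0`,
the restriction of `c_{p/q}` to `H` is symmetric iff `q ∣ n·k`. -/
theorem stmt12 (p q : ℤ) (hq : 0 < q) (hcop : IsCoprime p q)
    (k m n : ℤ) (hk : 0 < k) (hn : 0 < n) :
    (∀ x ∈ AddSubgroup.closure {((k, 0) : ℤ × ℤ), (m, n)},
      ∀ y ∈ AddSubgroup.closure {((k, 0) : ℤ × ℤ), (m, n)},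
        cθ ((p : ℝ) / (q : ℝ)) x y = cθ ((p : ℝ) / (q : ℝ)) y x) ↔ q ∣ n * k :=
  stmt12_general p q hq hcop k m n
end
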